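/- (Proposition 3) If Assumption 1 holds, then the constrained problem of minimizing (1/2) Σ_{(i,j)∈Ω} (Z_{ij} − X_{ij})² over all Z ∈ ℝ^{n×p} satisfying tr(Z^T L_r Z) = 0 and tr(Z L_c Z^T) = 0 has the unique solution Z* = Σ_{r=1}^R Σ_{c=1}^C μ*_{rc} χ_{A_r} χ_{B_c}^T, where Ω_{rc} = {(i,j) ∈ Ω : i ∈ A_r, j ∈ B_c} and μ*_{rc} = |Ω_{rc}|^{-1} Σ_{(i,j)∈Ω_{rc}} X_{ij}. -/

import Mathlib

open Matrix BigOperators Finset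
open scoped Classical

/-- The weighted graph Laplacian: `L i i = ∑ j, w i j` and `L i j = -(w i j)` for `i ≠ j`. -/
noncomputable def lap {n : ℕ} (w : Fin n → Fin n → ℝ) : Matrix (Fin n) (Fin n) ℝ :=
  Matrix.of fun i j => if i = j then (∑ k, w i k) else -(w i j)

/-- The graph on `Fin n` with `i ~ j` iff `i ≠ j` and `w i j > 0` (for symmetric `w`). -/
def graphOf {n : ℕ} (w : Fin n → Fin n → ℝ) : SimpleGraph (Fin n) :=
  SimpleGraph.fromRel (fun i j => 0 < w i j)

/-- The 0/1 indicator vector of a subset. -/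
noncomputable def chi {n : ℕ} (A : Set (Fin n)) : Fin n → ℝ :=
  A.indicator (fun _ => (1 : ℝ))

/-- The squared-error loss over the observed entries: `(1/2) ∑_{(i,j)∈Ω} (Z_{ij} - X_{ij})²`. -/
noncomputable def lossG {n p : ℕ} (Ω : Finset (Fin n × Fin p))
    (X Z : Matrix (Fin n) (Fin p) ℝ) : ℝ :=
  (1 / 2) * ∑ q ∈ Ω, (Z q.1 q.2 - X q.1 q.2) ^ 2

/-- The observed entries inside the bicluster `A_r × B_c`. -/
noncomputable def biclusterObs {n p R C : ℕ} (Ω : Finset (Fin n × Fin p))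
    (A : Fin R → Set (Fin n)) (B : Fin C → Set (Fin p)) (r : Fin R) (c : Fin C) :
    Finset (Fin n × Fin p) :=
  Ω.filter fun q => q.1 ∈ A r ∧ q.2 ∈ B c

/-- `Z* = ∑_{r,c} μ*_{rc} χ_{A_r} χ_{B_c}ᵀ` where `μ*_{rc}` is the average of the observed
entries of `X` over the bicluster `A_r × B_c`. -/
noncomputable def Zstar {n p R C : ℕ} (Ω : Finset (Fin n × Fin p))
    (X : Matrix (Fin n) (Fin p) ℝ)
    (A : Fin R → Set (Fin n)) (B : Fin C → Set (Fin p)) : Matrix (Fin n) (Fin p) ℝ :=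
  Matrix.of fun i j =>
    ∑ r, ∑ c,
      ((∑ q ∈ biclusterObs Ω A B r c, X q.1 q.2) / ((biclusterObs Ω A B r c).card : ℝ))
        * chi (A r) i * chi (B c) j


/-! Because the weights are symmetric and nonnegative, `tr(Zᵀ L Z) = ½ ∑ᵢⱼ wᵢⱼ ‖Zᵢ - Zⱼ‖²`, so
`tr(Zᵀ L_r Z) = 0` forces equal rows along every edge of the row graph, hence on each `A_r`, and
`tr(Z L_c Zᵀ) = 0` does the same for columns on each `B_c`. The feasible matrices are therefore
exactly those constant on every bicluster `A_r × B_c`. On such a matrix the loss splits, by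
Pythagoras, into the loss of `Z*` (the bicluster means) plus `∑_{(i,j)∈Ω} (Z_{ij} - Z*_{ij})²`;
Assumption 1 puts an observed entry in every bicluster, so that second sum vanishes only when
`Z = Z*`. -/

lemma trace_transpose_mul_mul {R m ι : Type*} [CommSemiring R] [Fintype m] [Fintype ι]
    (M : Matrix m m R) (Z : Matrix m ι R) :
    (Zᵀ * M * Z).trace = ∑ i, ∑ j, M i j * (Z i ⬝ᵥ Z j) := by
  simp only [trace, Matrix.diag, mul_apply, transpose_apply, dotProduct, Finset.mul_sum,
    Finset.sum_mul]
  rw [Finset.sum_comm]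
  simp_rw [Finset.sum_comm (s := (univ : Finset ι))]
  rw [Finset.sum_comm]
  refine Finset.sum_congr rfl fun i _ => Finset.sum_congr rfl fun j _ =>
    Finset.sum_congr rfl fun k _ => ?_
  ring

section Laplacian

variable {n : ℕ} {w : Fin n → Fin n → ℝ}

lemma forall_reachable_graphOf_iff {β : Type*} (f : Fin n → β) :
    (∀ i j, (graphOf w).Reachable i j → f i = f j) ↔ ∀ i j, 0 < w i j → f i = f j := by
  refine ⟨fun h i j hw => ?_, fun h i j hij => ?_⟩
  · by_cases hij : i = j
    · rw [hij]
    · exact h i j (SimpleGraph.Adj.reachable ⟨hij, Or.inl hw⟩)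
  · rw [SimpleGraph.reachable_iff_reflTransGen] at hij
    have := hij.lift (p := Eq) f fun a b hab => ?_
    · rwa [Relation.reflTransGen_eq_self] at this
    obtain ⟨-, hab | hba⟩ := hab
    exacts [h a b hab, (h b a hba).symm]

lemma trace_transpose_mul_lap_mul {ι : Type*} [Fintype ι] (hsymm : ∀ i j, w i j = w j i)
    (hdiag : ∀ i, w i i = 0) (Z : Matrix (Fin n) ι ℝ) :
    (Zᵀ * lap w * Z).trace = 1 / 2 * ∑ i, ∑ j, w i j * ((Z i - Z j) ⬝ᵥ (Z i - Z j)) := by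
  have hlap : ∀ i j, lap w i j = (if i = j then ∑ k, w i k else 0) - w i j := by
    intro i j
    by_cases h : i = j
    · subst h; simp [lap, hdiag]
    · simp [lap, h]
  have hswap : ∑ i, ∑ j, w i j * (Z j ⬝ᵥ Z j) = ∑ i, ∑ j, w i j * (Z i ⬝ᵥ Z i) := by
    rw [Finset.sum_comm]
    simp_rw [hsymm]
  have hswap' : ∑ i, ∑ j, w i j * (Z j ⬝ᵥ Z i) = ∑ i, ∑ j, w i j * (Z i ⬝ᵥ Z j) := by
    rw [Finset.sum_comm]
    simp_rw [hsymm]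
  simp only [trace_transpose_mul_mul, hlap, sub_mul, ite_mul, zero_mul, Finset.sum_sub_distrib,
    Finset.sum_ite_eq, Finset.mem_univ, if_true, Finset.sum_mul]
  simp only [dotProduct_sub, sub_dotProduct, mul_sub, Finset.sum_sub_distrib, hswap, hswap']
  ring

lemma trace_transpose_mul_lap_mul_eq_zero_iff {ι : Type*} [Fintype ι]
    (hsymm : ∀ i j, w i j = w j i) (hnonneg : ∀ i j, 0 ≤ w i j) (hdiag : ∀ i, w i i = 0)
    (Z : Matrix (Fin n) ι ℝ) :
    (Zᵀ * lap w * Z).trace = 0 ↔ ∀ i j, (graphOf w).Reachable i j → Z i = Z j := by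
  have hterm : ∀ i j, 0 ≤ w i j * ((Z i - Z j) ⬝ᵥ (Z i - Z j)) := fun i j =>
    mul_nonneg (hnonneg i j) (by simpa using dotProduct_self_star_nonneg (Z i - Z j))
  simp only [forall_reachable_graphOf_iff (w := w) (fun i => Z i),
    trace_transpose_mul_lap_mul hsymm hdiag, mul_eq_zero, one_div, inv_eq_zero,
    OfNat.ofNat_ne_zero, false_or,
    Finset.sum_eq_zero_iff_of_nonneg fun i _ => Finset.sum_nonneg fun j _ => hterm i j,
    Finset.sum_eq_zero_iff_of_nonneg fun j _ => hterm _ j, Finset.mem_univ, true_implies,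
    dotProduct_self_eq_zero, sub_eq_zero]
  exact forall₂_congr fun i j =>
    ⟨fun h hw => h.resolve_left hw.ne', fun h => (hnonneg i j).eq_or_lt.imp Eq.symm h⟩

lemma lap_traces_eq_zero_iff {p : ℕ} {wt : Fin p → Fin p → ℝ}
    (hsymm : ∀ i j, w i j = w j i) (hnonneg : ∀ i j, 0 ≤ w i j) (hdiag : ∀ i, w i i = 0)
    (hsymm' : ∀ i j, wt i j = wt j i) (hnonneg' : ∀ i j, 0 ≤ wt i j)
    (hdiag' : ∀ i, wt i i = 0) (Z : Matrix (Fin n) (Fin p) ℝ) :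
    (Zᵀ * lap w * Z).trace = 0 ∧ (Z * lap wt * Zᵀ).trace = 0 ↔
      ∀ i j i' j', (graphOf w).Reachable i i' → (graphOf wt).Reachable j j' →
        Z i j = Z i' j' := by
  have hcols := trace_transpose_mul_lap_mul_eq_zero_iff hsymm' hnonneg' hdiag' Zᵀ
  rw [transpose_transpose] at hcols
  rw [trace_transpose_mul_lap_mul_eq_zero_iff hsymm hnonneg hdiag, hcols]
  refine ⟨fun ⟨hrows, hcols⟩ i j i' j' hi hj => ?_, fun h => ⟨?_, ?_⟩⟩
  · exact (congrFun (hrows i i' hi) j).trans (congrFun (hcols j j' hj) i')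
  · exact fun i i' hi => funext fun j => h i j i' j hi .rfl
  · exact fun j j' hj => funext fun i => h i j i j' .rfl hj

end Laplacian

section FiberMean

variable {α β : Type*} [DecidableEq β] (Ω : Finset α) (f : α → β) (x : α → ℝ)

noncomputable def fiberMean (b : β) : ℝ := 𝔼 q ∈ Ω with f q = b, x q

lemma sum_fiberMean_sub_eq_zero (b : β) :
    ∑ q ∈ Ω with f q = b, (fiberMean Ω f x b - x q) = 0 := by
  rw [Finset.sum_sub_distrib, Finset.sum_const, nsmul_eq_mul, fiberMean,
    Finset.card_mul_expect, sub_self]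

lemma sum_sq_comp_sub_eq (g : β → ℝ) :
    ∑ q ∈ Ω, (g (f q) - x q) ^ 2 = ∑ q ∈ Ω, (fiberMean Ω f x (f q) - x q) ^ 2
      + ∑ q ∈ Ω, (g (f q) - fiberMean Ω f x (f q)) ^ 2 := by
  set m := fiberMean Ω f x
  have hcross : ∑ q ∈ Ω, (g (f q) - m (f q)) * (m (f q) - x q) = 0 := by
    rw [← Finset.sum_fiberwise_of_maps_to fun q hq => Finset.mem_image_of_mem f hq]
    refine Finset.sum_eq_zero fun b _ => ?_
    rw [Finset.sum_congr rfl fun q hq => by rw [(Finset.mem_filter.1 hq).2], ← Finset.mul_sum,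
      sum_fiberMean_sub_eq_zero, mul_zero]
  calc ∑ q ∈ Ω, (g (f q) - x q) ^ 2
      = ∑ q ∈ Ω, ((m (f q) - x q) ^ 2 + (g (f q) - m (f q)) ^ 2
          + 2 * ((g (f q) - m (f q)) * (m (f q) - x q))) :=
        Finset.sum_congr rfl fun q _ => by ring
    _ = _ := by
      rw [Finset.sum_add_distrib, Finset.sum_add_distrib, ← Finset.mul_sum, hcross, mul_zero,
        add_zero]

lemma sum_sq_fiberMean_sub_le {h : α → ℝ} (hh : h.FactorsThrough f) :
    ∑ q ∈ Ω, (fiberMean Ω f x (f q) - x q) ^ 2 ≤ ∑ q ∈ Ω, (h q - x q) ^ 2 := by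
  obtain ⟨g, rfl⟩ := (Function.factorsThrough_iff h).1 hh
  rw [Function.comp_def, sum_sq_comp_sub_eq Ω f x g]
  exact le_add_of_nonneg_right (Finset.sum_nonneg fun q _ => sq_nonneg _)

lemma eq_fiberMean_of_sum_sq_sub_le {h : α → ℝ} (hh : h.FactorsThrough f)
    (hle : ∑ q ∈ Ω, (h q - x q) ^ 2 ≤ ∑ q ∈ Ω, (fiberMean Ω f x (f q) - x q) ^ 2) :
    ∀ q ∈ Ω, h q = fiberMean Ω f x (f q) := by
  obtain ⟨g, rfl⟩ := (Function.factorsThrough_iff h).1 hh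
  rw [Function.comp_def, sum_sq_comp_sub_eq Ω f x g, add_le_iff_nonpos_right] at hle
  have hzero := (Finset.sum_eq_zero_iff_of_nonneg fun q _ => sq_nonneg _).1
    (hle.antisymm (Finset.sum_nonneg fun q _ => sq_nonneg (g (f q) - fiberMean Ω f x (f q))))
  exact fun q hq => sub_eq_zero.1 (pow_eq_zero_iff two_ne_zero |>.1 (hzero q hq))

end FiberMean

lemma Zstar_apply {n p R C : ℕ} {Ω : Finset (Fin n × Fin p)} {X : Matrix (Fin n) (Fin p) ℝ}
    {A : Fin R → Set (Fin n)} {B : Fin C → Set (Fin p)} {a : Fin n → Fin R}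
    {b : Fin p → Fin C} (hA : ∀ r, A r = {i | a i = r}) (hB : ∀ c, B c = {j | b j = c})
    (i : Fin n) (j : Fin p) :
    Zstar Ω X A B i j = fiberMean Ω (Prod.map a b) (Function.uncurry X) (a i, b j) := by
  have hobs : ∀ r c, biclusterObs Ω A B r c = {q ∈ Ω | Prod.map a b q = (r, c)} := by
    intro r c; ext q; simp [biclusterObs, hA, hB, Prod.ext_iff]
  simp only [Zstar, hobs, chi, Set.indicator, hA, hB, Set.mem_ofPred_eq, mul_ite, mul_one, mul_zero,
    sum_ite_eq, mem_univ, if_true, of_apply, fiberMean, expect_eq_sum_div_card]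
  rfl

lemma lossG_eq_sum_uncurry {n p : ℕ} (Ω : Finset (Fin n × Fin p))
    (X Z : Matrix (Fin n) (Fin p) ℝ) :
    lossG Ω X Z = 1 / 2 * ∑ q ∈ Ω, (Function.uncurry Z q - Function.uncurry X q) ^ 2 :=
  rfl

/-- Proposition 3: under Assumption 1, the problem of minimizing
`(1/2) ∑_{(i,j)∈Ω} (Z_{ij} - X_{ij})²` subject to `tr(Zᵀ L_r Z) = 0` and
`tr(Z L_c Zᵀ) = 0` has `Z*` as its unique solution. -/
theorem constrained_ls_unique_solution {n p R C : ℕ} (Ω : Finset (Fin n × Fin p))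
    (X : Matrix (Fin n) (Fin p) ℝ)
    (w : Fin n → Fin n → ℝ) (wt : Fin p → Fin p → ℝ)
    (hsymm : ∀ i j, w i j = w j i) (hnonneg : ∀ i j, 0 ≤ w i j)
    (hdiag : ∀ i, w i i = 0)
    (hsymm' : ∀ i j, wt i j = wt j i) (hnonneg' : ∀ i j, 0 ≤ wt i j)
    (hdiag' : ∀ i, wt i i = 0)
    (A : Fin R → Set (Fin n))
    (eA : (graphOf w).ConnectedComponent ≃ Fin R)
    (hA : ∀ r, A r = {v | eA ((graphOf w).connectedComponentMk v) = r})
    (B : Fin C → Set (Fin p))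
    (eB : (graphOf wt).ConnectedComponent ≃ Fin C)
    (hB : ∀ c, B c = {v | eB ((graphOf wt).connectedComponentMk v) = c})
    (hobs : ∀ r c, ∃ q ∈ Ω, q.1 ∈ A r ∧ q.2 ∈ B c) :
    ((Zstar Ω X A B)ᵀ * lap w * Zstar Ω X A B).trace = 0 ∧
    (Zstar Ω X A B * lap wt * (Zstar Ω X A B)ᵀ).trace = 0 ∧
    (∀ Z : Matrix (Fin n) (Fin p) ℝ,
      (Zᵀ * lap w * Z).trace = 0 → (Z * lap wt * Zᵀ).trace = 0 →
        lossG Ω X (Zstar Ω X A B) ≤ lossG Ω X Z) ∧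
    (∀ Z : Matrix (Fin n) (Fin p) ℝ,
      (Zᵀ * lap w * Z).trace = 0 → (Z * lap wt * Zᵀ).trace = 0 →
        lossG Ω X Z ≤ lossG Ω X (Zstar Ω X A B) → Z = Zstar Ω X A B) := by
  set f : Fin n × Fin p → Fin R × Fin C :=
    Prod.map (fun i => eA ((graphOf w).connectedComponentMk i))
      (fun j => eB ((graphOf wt).connectedComponentMk j))
  have hZstar : Function.uncurry (Zstar Ω X A B) = fiberMean Ω f (Function.uncurry X) ∘ f :=
    funext fun q => Zstar_apply hA hB q.1 q.2
  have hfeas : ∀ Z : Matrix (Fin n) (Fin p) ℝ,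
      (Zᵀ * lap w * Z).trace = 0 ∧ (Z * lap wt * Zᵀ).trace = 0 ↔
        (Function.uncurry Z).FactorsThrough f := by
    intro Z
    simp only [lap_traces_eq_zero_iff hsymm hnonneg hdiag hsymm' hnonneg' hdiag',
      Function.FactorsThrough, Prod.forall, f, Prod.map_apply, Prod.mk.injEq, eA.apply_eq_iff_eq,
      eB.apply_eq_iff_eq, SimpleGraph.ConnectedComponent.eq, and_imp]
    rfl
  have hcover : ∀ q, ∃ q' ∈ Ω, f q' = f q := fun q => (hobs (f q).1 (f q).2).imp
    fun q' ⟨hq', h₁, h₂⟩ => ⟨hq', Prod.ext (by rwa [hA] at h₁) (by rwa [hB] at h₂)⟩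
  obtain ⟨h₁, h₂⟩ := (hfeas _).2 ((Function.factorsThrough_iff _).2 ⟨_, hZstar⟩)
  refine ⟨h₁, h₂, fun Z hZ₁ hZ₂ => ?_, fun Z hZ₁ hZ₂ hle => ?_⟩
  · rw [lossG_eq_sum_uncurry, lossG_eq_sum_uncurry, hZstar]
    exact mul_le_mul_of_nonneg_left
      (sum_sq_fiberMean_sub_le Ω f _ ((hfeas Z).1 ⟨hZ₁, hZ₂⟩)) (by norm_num)
  · rw [lossG_eq_sum_uncurry, lossG_eq_sum_uncurry, hZstar] at hle
    have hΩ := eq_fiberMean_of_sum_sq_sub_le Ω f _ ((hfeas Z).1 ⟨hZ₁, hZ₂⟩)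
      (le_of_mul_le_mul_left hle (by norm_num))
    ext i j
    obtain ⟨q, hq, hfq⟩ := hcover (i, j)
    calc Z i j = Function.uncurry Z q := ((hfeas Z).1 ⟨hZ₁, hZ₂⟩ hfq).symm
      _ = fiberMean Ω f (Function.uncurry X) (f q) := hΩ q hq
      _ = Zstar Ω X A B i j := by rw [hfq]; exact (congrFun hZstar (i, j)).symm
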